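/- arXiv:1904.05452 — 4 statements merged into one kernel-verified Lean document; each statement's English description precedes it below -/
import Mathlib

section
/- Let IR(1),...,IR(n) be random subsets of {1,...,n} satisfying the (ε,δ)-DP condition (for all a,b and events S, Pr[IR(a) ∈ S] ≤ e^ε Pr[IR(b) ∈ S] + δ), and suppose IR is errorless, i.e., Pr[j ∈ IR(j)] = 1 for all j. Then for every i, the expected cardinality E[|IR(i)|] ≥ (1-δ)·n. -/
open scoped Classical

/-- Probability of an event on a finite weighted sample space. -/
noncomputable def prEvent {Ω : Type*} [Fintype Ω] (μ : Ω → ℝ) (E : Ω → Prop) : ℝ :=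
  ∑ ω ∈ Finset.univ.filter (fun ω => E ω), μ ω

theorem stmt1 {Ω : Type*} [Fintype Ω] (μ : Ω → ℝ)
    (hμ : ∀ ω, 0 ≤ μ ω) (hsum : ∑ ω, μ ω = 1)
    (n : ℕ) (IR : Fin n → Ω → Finset (Fin n)) (ε δ : ℝ) (hε : 0 ≤ ε) (hδ : 0 ≤ δ)
    (hDP : ∀ a b : Fin n, ∀ S : Set (Finset (Fin n)),
      prEvent μ (fun ω => IR a ω ∈ S) ≤ Real.exp ε * prEvent μ (fun ω => IR b ω ∈ S) + δ)
    (herrorless : ∀ j : Fin n, prEvent μ (fun ω => j ∈ IR j ω) = 1) :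
    ∀ i : Fin n, (1 - δ) * n ≤ ∑ ω, μ ω * ((IR i ω).card : ℝ) := by
  intro i
  -- prEvent as a sum of if-then-else
  have hpr : ∀ E : Ω → Prop, prEvent μ E = ∑ ω, if E ω then μ ω else 0 := by
    intro E; rw [prEvent, Finset.sum_filter]
  -- complement rule
  have hcompl : ∀ E : Ω → Prop, prEvent μ (fun ω => ¬ E ω) = 1 - prEvent μ E := by
    intro E
    have h : prEvent μ (fun ω => E ω) + prEvent μ (fun ω => ¬ E ω) = 1 := by
      rw [hpr, hpr, ← hsum, ← Finset.sum_add_distrib]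
      refine Finset.sum_congr rfl fun ω _ => ?_
      by_cases hE : E ω <;> simp [hE]
    linarith
  -- each coordinate is covered with probability ≥ 1 - δ
  have hkey : ∀ j : Fin n, 1 - δ ≤ prEvent μ (fun ω => j ∈ IR i ω) := by
    intro j
    have hs := hDP i j {T : Finset (Fin n) | j ∉ T}
    simp only [Set.mem_setOf_eq] at hs
    have h1 : prEvent μ (fun ω => j ∉ IR j ω) = 0 := by
      rw [hcompl (fun ω => j ∈ IR j ω), herrorless j]; ring
    have h2 : prEvent μ (fun ω => j ∉ IR i ω) = 1 - prEvent μ (fun ω => j ∈ IR i ω) :=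
      hcompl (fun ω => j ∈ IR i ω)
    rw [h1, h2] at hs
    linarith [hs]
  -- expected cardinality as sum over coordinates
  have hswap : (∑ ω, μ ω * ((IR i ω).card : ℝ))
      = ∑ j : Fin n, prEvent μ (fun ω => j ∈ IR i ω) := by
    have hcard : ∀ ω, ((IR i ω).card : ℝ)
        = ∑ j : Fin n, if j ∈ IR i ω then (1 : ℝ) else 0 := by
      intro ω
      rw [Finset.sum_ite_mem, Finset.univ_inter, Finset.sum_const, Finset.card_eq_sum_ones]
      simp
    calc (∑ ω, μ ω * ((IR i ω).card : ℝ))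
        = ∑ ω, ∑ j : Fin n, (if j ∈ IR i ω then μ ω else 0) := by
          refine Finset.sum_congr rfl fun ω _ => ?_
          rw [hcard, Finset.mul_sum]
          refine Finset.sum_congr rfl fun j _ => ?_
          split <;> simp
      _ = ∑ j : Fin n, ∑ ω, (if j ∈ IR i ω then μ ω else 0) := Finset.sum_comm
      _ = ∑ j : Fin n, prEvent μ (fun ω => j ∈ IR i ω) := by
          refine Finset.sum_congr rfl fun j _ => ?_
          rw [hpr]
          congr!
  rw [hswap]
  calc (1 - δ) * n = ∑ _j : Fin n, (1 - δ) := by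
        rw [Finset.sum_const, Finset.card_univ, Fintype.card_fin, nsmul_eq_mul]; ring
    _ ≤ ∑ j : Fin n, prEvent μ (fun ω => j ∈ IR i ω) :=
        Finset.sum_le_sum fun j _ => hkey j
end

section
/- Let IR(1),...,IR(n) be random subsets of {1,...,n} satisfying the (ε,δ)-DP condition, with error probability at most α, i.e., Pr[j ∈ IR(j)] ≥ 1-α for all j. Then for every i, E[|IR(i)|] ≥ (n-1)·(1-α-δ)/e^ε. -/
open scoped Classical

theorem stmt2 {Ω : Type*} [Fintype Ω] (μ : Ω → ℝ)
    (hμ : ∀ ω, 0 ≤ μ ω) (hsum : ∑ ω, μ ω = 1)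
    (n : ℕ) (IR : Fin n → Ω → Finset (Fin n)) (ε δ α : ℝ)
    (hε : 0 ≤ ε) (hδ : 0 ≤ δ) (hα : 0 ≤ α) (hαδ : 0 ≤ 1 - α - δ)
    (hDP : ∀ a b : Fin n, ∀ S : Set (Finset (Fin n)),
      prEvent μ (fun ω => IR a ω ∈ S) ≤ Real.exp ε * prEvent μ (fun ω => IR b ω ∈ S) + δ)
    (herr : ∀ j : Fin n, 1 - α ≤ prEvent μ (fun ω => j ∈ IR j ω)) :
    ∀ i : Fin n, ((n : ℝ) - 1) * (1 - α - δ) / Real.exp ε ≤ ∑ ω, μ ω * ((IR i ω).card : ℝ) := by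
  intro i
  have hexp : (0:ℝ) < Real.exp ε := Real.exp_pos ε
  have key : ∀ j : Fin n, (1 - α - δ) / Real.exp ε ≤ prEvent μ (fun ω => j ∈ IR i ω) := by
    intro j
    have h := hDP j i {T | j ∈ T}
    have h2 := herr j
    simp only [Set.mem_setOf_eq] at h
    rw [div_le_iff₀ hexp]
    nlinarith
  have expand : ∑ ω, μ ω * ((IR i ω).card : ℝ)
      = ∑ j : Fin n, prEvent μ (fun ω => j ∈ IR i ω) := by
    unfold prEvent
    have h1 : ∀ ω : Ω, μ ω * ((IR i ω).card : ℝ)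
        = ∑ j : Fin n, if j ∈ IR i ω then μ ω else 0 := by
      intro ω
      rw [Finset.sum_ite_mem, Finset.univ_inter, Finset.sum_const, nsmul_eq_mul, mul_comm]
    simp_rw [h1]
    rw [Finset.sum_comm]
    congr 1
    ext j
    rw [Finset.sum_filter]
  rw [expand]
  have step : ((n:ℝ)) * ((1 - α - δ) / Real.exp ε)
      ≤ ∑ j : Fin n, prEvent μ (fun ω => j ∈ IR i ω) := by
    have := Finset.card_nsmul_le_sum Finset.univ
      (fun j => prEvent μ (fun ω => j ∈ IR i ω)) ((1 - α - δ) / Real.exp ε)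
      (fun j _ => key j)
    simpa [nsmul_eq_mul] using this
  have hnn : 0 ≤ (1 - α - δ) / Real.exp ε := div_nonneg hαδ hexp.le
  calc ((n : ℝ) - 1) * (1 - α - δ) / Real.exp ε
      = ((n:ℝ) - 1) * ((1 - α - δ) / Real.exp ε) := by ring
    _ ≤ (n:ℝ) * ((1 - α - δ) / Real.exp ε) := by nlinarith
    _ ≤ _ := step
end

section
/- Suppose for some k ≥ 0 and l ≥ 1 that c^{2kl} ≥ (1-α)^l · n^l, and suppose there exists a transcript T with positive probability such that, under the uniform distribution U over [n]^l, some sequence Q has Pr[U = Q | RAM(U) = T] ≥ 1/n^l, and ε-DP implies Pr[U = Q' | RAM(U) = T] ≥ e^{-lε} · (1-α)^l / c^{2kl} for all Q' ≠ Q. Then 1 ≥ e^{-lε} · (n^l - 1) · (1-α)^l / c^{2kl}, hence k ≥ (1/(2 log c)) · (log(n(1-α)) - ε - (1/l)·log 2) whenever n^l ≥ 2. -/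
/-!
The posterior mass is at least `e^{-lε}(1-α)^l / c^{2kl}` on each of the `n^l - 1` sequences
other than `Q`, and the total mass is at most one; this is the counting inequality. When
`n^l ≥ 2` we have `n^l - 1 ≥ n^l / 2`, and taking logarithms of the counting inequality gives
the lower bound on `k`.
-/

theorem card_sub_one_mul_le_sum {ι : Type*} [Fintype ι] [DecidableEq ι] (f : ι → ℝ) (a : ι)
    (ha : 0 ≤ f a) {b : ℝ} (hb : ∀ x, x ≠ a → b ≤ f x) :
    ((Fintype.card ι : ℝ) - 1) * b ≤ ∑ x, f x := by
  have hrest : ((Finset.univ.erase a).card : ℝ) * b ≤ ∑ x ∈ Finset.univ.erase a, f x := by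
    simpa only [nsmul_eq_mul] using Finset.card_nsmul_le_sum _ f b
      fun x hx => hb x (Finset.ne_of_mem_erase hx)
  rw [Finset.cast_card_erase_of_mem (Finset.mem_univ a), Finset.card_univ] at hrest
  rw [← Finset.add_sum_erase _ f (Finset.mem_univ a)]
  linarith

theorem le_of_exp_neg_mul_rpow_div_two_le_rpow {y c ε k l : ℝ} (hy : 0 < y) (hc : 1 < c)
    (hl : 0 < l) (h : Real.exp (-(l * ε)) * y ^ l / 2 ≤ c ^ (2 * k * l)) :
    1 / (2 * Real.log c) * (Real.log y - ε - 1 / l * Real.log 2) ≤ k := by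
  have hlogc : 0 < Real.log c := Real.log_pos hc
  have hlog := Real.log_le_log (by positivity) h
  rw [Real.log_div (by positivity) two_ne_zero, Real.log_mul (by positivity) (by positivity),
    Real.log_exp, Real.log_rpow hy, Real.log_rpow (by linarith)] at hlog
  rw [div_mul_eq_mul_div, one_mul, div_le_iff₀ (by positivity)]
  refine le_of_mul_le_mul_left ?_ hl
  rw [mul_sub, mul_sub, ← mul_assoc, mul_one_div_cancel hl.ne', one_mul]
  linarith

theorem stmt5_general (n c : ℝ) (hn : 2 ≤ n) (hc : 2 ≤ c)
    (ε α k : ℝ) (hα1 : α < 1)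
    (l : ℕ) (hl : 1 ≤ l)
    (Seq : Type*) [Fintype Seq] (hcard : (Fintype.card Seq : ℝ) = n ^ l)
    (P : Seq → ℝ) (hP0 : ∀ Q, 0 ≤ P Q) (hP1 : ∑ Q, P Q ≤ 1)
    (Q : Seq)
    (hDPlb : ∀ Q' : Seq, Q' ≠ Q →
      P Q' ≥ Real.exp (-((l : ℝ) * ε)) * (1 - α) ^ l / c ^ (2 * k * (l : ℝ))) :
    1 ≥ Real.exp (-((l : ℝ) * ε)) * (n ^ l - 1) * (1 - α) ^ l / c ^ (2 * k * (l : ℝ)) ∧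
      ((2 : ℝ) ≤ n ^ l →
        k ≥ (1 / (2 * Real.log c)) *
          (Real.log (n * (1 - α)) - ε - (1 / (l : ℝ)) * Real.log 2)) := by
  classical
  have hC : 0 < c ^ (2 * k * (l : ℝ)) := by positivity
  have hcounting :
      1 ≥ Real.exp (-((l : ℝ) * ε)) * (n ^ l - 1) * (1 - α) ^ l / c ^ (2 * k * (l : ℝ)) :=
    calc _ = ((Fintype.card Seq : ℝ) - 1) *
          (Real.exp (-((l : ℝ) * ε)) * (1 - α) ^ l / c ^ (2 * k * (l : ℝ))) := by
          rw [hcard]; ring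
      _ ≤ ∑ Q, P Q := card_sub_one_mul_le_sum P Q (hP0 Q) hDPlb
      _ ≤ 1 := hP1
  refine ⟨hcounting, fun hnl => ?_⟩
  refine le_of_exp_neg_mul_rpow_div_two_le_rpow (by nlinarith) (by linarith)
    (by exact_mod_cast hl) ?_
  rw [ge_iff_le, div_le_one hC] at hcounting
  calc _ = Real.exp (-((l : ℝ) * ε)) * (n ^ l / 2) * (1 - α) ^ l := by
        rw [Real.rpow_natCast, mul_pow]; ring
    _ ≤ Real.exp (-((l : ℝ) * ε)) * (n ^ l - 1) * (1 - α) ^ l := by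
        gcongr
        linarith
    _ ≤ _ := hcounting

/-- The counting inequality at the heart of the DP-RAM lower bound. -/
theorem stmt5 (n c : ℝ) (hn : 2 ≤ n) (hc : 2 ≤ c)
    (ε α k : ℝ) (hε : 0 ≤ ε) (hα0 : 0 ≤ α) (hα1 : α < 1) (hk : 0 ≤ k)
    (l : ℕ) (hl : 1 ≤ l)
    (Seq : Type*) [Fintype Seq] (hcard : (Fintype.card Seq : ℝ) = n ^ l)
    (P : Seq → ℝ) (hP0 : ∀ Q, 0 ≤ P Q) (hP1 : ∑ Q, P Q ≤ 1)
    (hcount : c ^ (2 * k * (l : ℝ)) ≥ (1 - α) ^ l * n ^ l)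
    (Q : Seq) (hQ : P Q ≥ 1 / n ^ l)
    (hDPlb : ∀ Q' : Seq, Q' ≠ Q →
      P Q' ≥ Real.exp (-((l : ℝ) * ε)) * (1 - α) ^ l / c ^ (2 * k * (l : ℝ))) :
    1 ≥ Real.exp (-((l : ℝ) * ε)) * (n ^ l - 1) * (1 - α) ^ l / c ^ (2 * k * (l : ℝ)) ∧
      ((2 : ℝ) ≤ n ^ l →
        k ≥ (1 / (2 * Real.log c)) *
          (Real.log (n * (1 - α)) - ε - (1 / (l : ℝ)) * Real.log 2)) :=
  stmt5_general n c hn hc ε α k hα1 l hl Seq hcard P hP0 hP1 Q hDPlb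
end

section
/- Let n ≥ 2, 0 < α < 1, ε ≥ 0 with e^ε = (1-α)n/(αK) + 1 for some integer 1 ≤ K ≤ n. For the DP-IR scheme of the previous statement, for any queries q ≠ q' and any K-subset T with q ∈ T and q' ∉ T: Pr[IR(q) = T] / Pr[IR(q') = T] ≤ (1-α)·C(n,K) / (α·C(n-1,K-1)) + 1 = (1-α)n/(αK) + 1 = e^ε. Hence the scheme satisfies ε-DP for ε = log((1-α)n/(αK) + 1). -/
open scoped Classical

lemma cardAll (n K : ℕ) :
    (Finset.univ.filter (fun A : Finset (Fin n) => A.card = K)).card = n.choose K := by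
  have h : Finset.univ.filter (fun A : Finset (Fin n) => A.card = K)
      = Finset.powersetCard K Finset.univ := by
    ext A; simp [Finset.mem_powersetCard]
  rw [h, Finset.card_powersetCard, Finset.card_univ, Fintype.card_fin]

lemma cardMem (n K : ℕ) (hK : 1 ≤ K) (i : Fin n) :
    (Finset.univ.filter (fun A : Finset (Fin n) => A.card = K ∧ i ∈ A)).card
      = (n - 1).choose (K - 1) := by
  have h : (Finset.univ.filter (fun A : Finset (Fin n) => A.card = K ∧ i ∈ A)).card
      = (((Finset.univ : Finset (Fin n)).erase i).powersetCard (K - 1)).card := by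
    apply Finset.card_bij' (fun A _ => A.erase i) (fun B _ => insert i B)
    · intro A hA
      simp only [Finset.mem_filter, Finset.mem_univ, true_and] at hA
      exact Finset.insert_erase hA.2
    · intro B hB
      simp only [Finset.mem_powersetCard] at hB
      exact Finset.erase_insert (fun h => (Finset.mem_erase.mp (hB.1 h)).1 rfl)
    · intro A hA
      simp only [Finset.mem_filter, Finset.mem_univ, true_and] at hA
      simp only [Finset.mem_powersetCard]
      refine ⟨Finset.erase_subset_erase i (Finset.subset_univ A), ?_⟩
      rw [Finset.card_erase_of_mem hA.2, hA.1]
    · intro B hB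
      simp only [Finset.mem_powersetCard] at hB
      have hiB : i ∉ B := fun h => (Finset.mem_erase.mp (hB.1 h)).1 rfl
      simp only [Finset.mem_filter, Finset.mem_univ, true_and]
      refine ⟨?_, Finset.mem_insert_self i B⟩
      rw [Finset.card_insert_of_notMem hiB, hB.2]
      omega
  rw [h, Finset.card_powersetCard, Finset.card_erase_of_mem (Finset.mem_univ i),
    Finset.card_univ, Fintype.card_fin]


/-- The DP-IR scheme: on query `i`, with probability `1-α` the downloaded set is a
uniformly random `K`-subset containing `i`, and with probability `α` it is a
uniformly random `K`-subset of all `n` indices. -/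
noncomputable def dpirPMF (n K : ℕ) (α : ℝ) (i : Fin n) (T : Finset (Fin n)) : ℝ :=
  (1 - α) * (if T.card = K ∧ i ∈ T then
      (1 : ℝ) / ((Finset.univ.filter
        (fun A : Finset (Fin n) => A.card = K ∧ i ∈ A)).card : ℝ) else 0)
  + α * (if T.card = K then
      (1 : ℝ) / ((Finset.univ.filter
        (fun A : Finset (Fin n) => A.card = K)).card : ℝ) else 0)

/-- Probability that the downloaded set on query `i` lies in the event `S`. -/
noncomputable def dpirPr (n K : ℕ) (α : ℝ) (i : Fin n) (S : Set (Finset (Fin n))) : ℝ :=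
  ∑ T ∈ Finset.univ.filter (fun T => T ∈ S), dpirPMF n K α i T

theorem stmt8 (n K : ℕ) (hn : 2 ≤ n) (α ε : ℝ) (hα0 : 0 < α) (hα1 : α < 1)
    (hε : 0 ≤ ε) (hK1 : 1 ≤ K) (hKn : K ≤ n)
    (hεdef : Real.exp ε = (1 - α) * (n : ℝ) / (α * K) + 1) :
    (∀ (q q' : Fin n) (T : Finset (Fin n)), q ≠ q' → T.card = K → q ∈ T → q' ∉ T →
      dpirPMF n K α q T / dpirPMF n K α q' T ≤
        (1 - α) * (n.choose K : ℝ) / (α * ((n - 1).choose (K - 1) : ℝ)) + 1 ∧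
      (1 - α) * (n.choose K : ℝ) / (α * ((n - 1).choose (K - 1) : ℝ)) + 1 =
        Real.exp ε) ∧
    (∀ (a b : Fin n) (S : Set (Finset (Fin n))),
      dpirPr n K α a S ≤ Real.exp ε * dpirPr n K α b S) := by
  set C1 : ℝ := ((n - 1).choose (K - 1) : ℝ) with hC1
  set C2 : ℝ := (n.choose K : ℝ) with hC2
  have hC1pos : (0 : ℝ) < C1 := by
    rw [hC1]
    exact_mod_cast Nat.choose_pos (show K - 1 ≤ n - 1 by omega)
  have hC2pos : (0 : ℝ) < C2 := by
    rw [hC2]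
    exact_mod_cast Nat.choose_pos hKn
  have hnpos : (0 : ℝ) < (n : ℝ) := by positivity
  have hKpos : (0 : ℝ) < (K : ℝ) := by exact_mod_cast hK1
  have hα' : (0 : ℝ) < 1 - α := by linarith
  -- key combinatorial identity: K * C(n,K) = n * C(n-1,K-1)
  have hKC : (K : ℝ) * C2 = (n : ℝ) * C1 := by
    have h : n * (n - 1).choose (K - 1) = n.choose K * K := by
      obtain ⟨m, rfl⟩ : ∃ m, n = m + 1 := ⟨n - 1, by omega⟩
      obtain ⟨j, rfl⟩ : ∃ j, K = j + 1 := ⟨K - 1, by omega⟩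
      simpa using Nat.add_one_mul_choose_eq m j
    have h' : (n : ℝ) * ((n - 1).choose (K - 1) : ℝ) = (n.choose K : ℝ) * (K : ℝ) := by
      exact_mod_cast h
    rw [hC1, hC2]
    linarith
  -- the key equality
  have hkey : (1 - α) * C2 / (α * C1) + 1 = Real.exp ε := by
    rw [hεdef]
    have : (1 - α) * C2 / (α * C1) = (1 - α) * (n : ℝ) / (α * (K : ℝ)) := by
      rw [div_eq_div_iff (by positivity) (by positivity)]
      linear_combination ((1 - α) * α) * hKC
    rw [this]
  -- identity for the pmf: e^ε * (α / C2) = (1-α)/C1 + α/C2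
  have hpmf : Real.exp ε * (α / C2) = (1 - α) / C1 + α / C2 := by
    rw [← hkey]
    field_simp
  constructor
  · intro q q' T hqq' hTK hqT hq'T
    have hnum : dpirPMF n K α q T = (1 - α) / C1 + α / C2 := by
      unfold dpirPMF
      rw [cardMem n K hK1 q, cardAll n K]
      rw [if_pos ⟨hTK, hqT⟩, if_pos hTK]
      ring
    have hden : dpirPMF n K α q' T = α / C2 := by
      unfold dpirPMF
      rw [if_neg (by tauto), if_pos hTK]
      rw [cardAll n K]
      ring
    refine ⟨?_, hkey⟩
    rw [hnum, hden]
    rw [div_le_iff₀ (by positivity), hkey, hpmf]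
  · intro a b S
    unfold dpirPr
    rw [Finset.mul_sum]
    apply Finset.sum_le_sum
    intro T _
    by_cases hTK : T.card = K
    · have hb : α / C2 ≤ dpirPMF n K α b T := by
        unfold dpirPMF
        rw [if_pos hTK, cardAll n K]
        have h1 : (0 : ℝ) ≤ (1 - α) * (if T.card = K ∧ b ∈ T then
            (1 : ℝ) / ((Finset.univ.filter
              (fun A : Finset (Fin n) => A.card = K ∧ b ∈ A)).card : ℝ) else 0) := by
          positivity
        rw [← hC2]
        have h2 : α * (1 / C2) = α / C2 := by ring
        linarith
      have ha : dpirPMF n K α a T ≤ (1 - α) / C1 + α / C2 := by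
        unfold dpirPMF
        rw [if_pos hTK, cardAll n K, cardMem n K hK1 a]
        by_cases haT : a ∈ T
        · rw [if_pos ⟨hTK, haT⟩, ← hC1, ← hC2]
          apply le_of_eq; ring
        · rw [if_neg (by tauto), ← hC2]
          have h3 : (0 : ℝ) ≤ (1 - α) / C1 := by positivity
          have h2 : α * (1 / C2) = α / C2 := by ring
          linarith
      calc dpirPMF n K α a T ≤ (1 - α) / C1 + α / C2 := ha
        _ = Real.exp ε * (α / C2) := hpmf.symm
        _ ≤ Real.exp ε * dpirPMF n K α b T := by
            exact mul_le_mul_of_nonneg_left hb (Real.exp_pos ε).le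
    · have ha : dpirPMF n K α a T = 0 := by
        unfold dpirPMF
        rw [if_neg (by tauto), if_neg hTK]; ring
      have hb : dpirPMF n K α b T = 0 := by
        unfold dpirPMF
        rw [if_neg (by tauto), if_neg hTK]; ring
      rw [ha, hb]; simp
end
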